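/- Let (Ω, 𝒜, μ) be a finite measure space, X a real Banach space, and 1 ≤ p < ∞. If the Lebesgue–Bochner space L^p(μ, X) of p-integrable X-valued functions (with its usual norm ‖f‖_p = (∫_Ω ‖f(t)‖^p dμ(t))^{1/p}) has the Ball Dentable Property (BDP), then X has BDP. -/

import Mathlib

/-!
Let `F` be a norm-one functional on `Lᵖ(μ, X)` whose slice `S` has diameter `< ε/4`. As simple
functions are dense (`p < ∞`), `S` contains a simple function `s = ∑ 1_{A_y} y` with `F s` close
to `1`. Each fiber `A_y` induces the functional `ψ_y = F (1_{A_y} ·)` on `X`. Replacing the value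
`y` of `s` on `A_y` by `‖y‖ v_y`, with `v_y` in the slice `{ψ_y > ‖ψ_y‖ - δ}` of `B_X`, gives a
function still in `S` when `δ` is small, and two such replacements whose choices differ by at
least `r` on every fiber are `r ‖s‖` apart. Hence one of the slices `{ψ_y > ‖ψ_y‖ - δ}` has
diameter at most `ε/2`, and normalising `ψ_y` turns it into a slice of `B_X` as in `BDP`.
-/

open Metric Topology Pointwise ENNReal

noncomputable section

/-- The slice `S(B_X, f, α) = {x ∈ B_X : f x > 1 - α}` of the closed unit ball of `X`
determined by the functional `f` and `α`. -/
def ballSlice (X : Type*) [NormedAddCommGroup X] [NormedSpace ℝ X]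
    (f : X →L[ℝ] ℝ) (α : ℝ) : Set X :=
  {x | x ∈ closedBall (0 : X) 1 ∧ 1 - α < f x}

/-- `X` has the Ball Dentable Property: the closed unit ball has slices (determined by
norm-one functionals) of arbitrarily small diameter. -/
def BDP (X : Type*) [NormedAddCommGroup X] [NormedSpace ℝ X] : Prop :=
  ∀ ε > (0 : ℝ), ∃ f : X →L[ℝ] ℝ, ‖f‖ = 1 ∧ ∃ α > (0 : ℝ), diam (ballSlice X f α) < ε

/-- The weak topology on `X`: the coarsest topology making all continuous linear
functionals continuous. -/
def weakTop (X : Type*) [NormedAddCommGroup X] [NormedSpace ℝ X] : TopologicalSpace X :=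
  ⨅ f : X →L[ℝ] ℝ, TopologicalSpace.induced f inferInstance

/-- `X` has the Ball Huskable Property: the closed unit ball has nonempty relatively
weakly open subsets of arbitrarily small diameter. -/
def BHP (X : Type*) [NormedAddCommGroup X] [NormedSpace ℝ X] : Prop :=
  ∀ ε > (0 : ℝ), ∃ V : Set X, IsOpen[weakTop X] V ∧
    (V ∩ closedBall (0 : X) 1).Nonempty ∧ diam (V ∩ closedBall (0 : X) 1) < ε

/-- `X` has the Ball Small Combination of Slices Property: there are finite convex
combinations of slices of the closed unit ball of arbitrarily small diameter. -/
def BSCSP (X : Type*) [NormedAddCommGroup X] [NormedSpace ℝ X] : Prop :=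
  ∀ ε > (0 : ℝ), ∃ (n : ℕ) (f : Fin n → X →L[ℝ] ℝ) (α lam : Fin n → ℝ),
    (∀ i, ‖f i‖ = 1) ∧ (∀ i, 0 < α i) ∧ (∀ i, 0 ≤ lam i) ∧ (∑ i, lam i = 1) ∧
    diam (∑ i, lam i • ballSlice X (f i) (α i)) < ε

/-- The weak* ballSlice `{g ∈ B_{E*} : g e > 1 - α}` of the closed unit ball of the dual of `E`
determined by `e : E` and `α`. -/
def wstarSlice (E : Type*) [NormedAddCommGroup E] [NormedSpace ℝ E]
    (e : E) (α : ℝ) : Set (E →L[ℝ] ℝ) :=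
  {g | g ∈ closedBall (0 : E →L[ℝ] ℝ) 1 ∧ 1 - α < g e}

/-- The dual of `E` has the w*-Ball Dentable Property: the closed unit ball of `E*` has
weak* slices (determined by norm-one elements of `E`) of arbitrarily small diameter. -/
def wstarBDP (E : Type*) [NormedAddCommGroup E] [NormedSpace ℝ E] : Prop :=
  ∀ ε > (0 : ℝ), ∃ e : E, ‖e‖ = 1 ∧ ∃ α > (0 : ℝ), diam (wstarSlice E e α) < ε

/-- The weak* topology `σ(E*, E)` on the dual of `E`. -/
def wstarTop (E : Type*) [NormedAddCommGroup E] [NormedSpace ℝ E] :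
    TopologicalSpace (E →L[ℝ] ℝ) :=
  ⨅ e : E, TopologicalSpace.induced (fun g : E →L[ℝ] ℝ => g e) inferInstance

/-- The dual of `E` has the w*-Ball Huskable Property: the closed unit ball of `E*` has
nonempty relatively weak*-open subsets of arbitrarily small diameter. -/
def wstarBHP (E : Type*) [NormedAddCommGroup E] [NormedSpace ℝ E] : Prop :=
  ∀ ε > (0 : ℝ), ∃ V : Set (E →L[ℝ] ℝ), IsOpen[wstarTop E] V ∧
    (V ∩ closedBall (0 : E →L[ℝ] ℝ) 1).Nonempty ∧
    diam (V ∩ closedBall (0 : E →L[ℝ] ℝ) 1) < ε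

/-- The dual of `E` has the w*-Ball Small Combination of Slices Property: there are finite
convex combinations of weak* slices of the closed unit ball of `E*` of arbitrarily small
diameter. -/
def wstarBSCSP (E : Type*) [NormedAddCommGroup E] [NormedSpace ℝ E] : Prop :=
  ∀ ε > (0 : ℝ), ∃ (n : ℕ) (e : Fin n → E) (α lam : Fin n → ℝ),
    (∀ i, ‖e i‖ = 1) ∧ (∀ i, 0 < α i) ∧ (∀ i, 0 ≤ lam i) ∧ (∑ i, lam i = 1) ∧
    diam (∑ i, lam i • wstarSlice E (e i) (α i)) < ε

section Slices

variable {X : Type*} [NormedAddCommGroup X] [NormedSpace ℝ X]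

theorem ballSlice_subset_closedBall (f : X →L[ℝ] ℝ) (α : ℝ) :
    ballSlice X f α ⊆ closedBall 0 1 :=
  fun _ hx => hx.1

theorem BDP.nontrivial (h : BDP X) : Nontrivial X := by
  obtain ⟨f, hf, -⟩ := h 1 one_pos
  by_contra hX
  rw [not_nontrivial_iff_subsingleton] at hX
  simp [ContinuousLinearMap.opNorm_subsingleton] at hf

theorem exists_norm_lt_one_lt_apply (F : X →L[ℝ] ℝ) {c : ℝ} (hc : c < ‖F‖) :
    ∃ x, ‖x‖ < 1 ∧ c < F x := by
  obtain ⟨x, hx, hcx⟩ := F.exists_lt_apply_of_lt_opNorm hc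
  rw [Real.norm_eq_abs] at hcx
  rcases abs_choice (F x) with hFx | hFx
  · exact ⟨x, hx, hFx ▸ hcx⟩
  · exact ⟨-x, by rwa [norm_neg], by rwa [map_neg, ← hFx]⟩

theorem exists_ballSlice_subset_ballSlice [Nontrivial X] (φ : X →L[ℝ] ℝ) {β : ℝ}
    (hβ : 1 - β < ‖φ‖) : ∃ f : X →L[ℝ] ℝ, ‖f‖ = 1 ∧ ∃ α > 0, ballSlice X f α ⊆ ballSlice X φ β := by
  rcases eq_or_ne φ 0 with rfl | hφ
  · obtain ⟨f, hf, -⟩ := exists_dual_vector' ℝ (0 : X)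
    refine ⟨f, hf, 1, one_pos, fun w hw => ⟨hw.1, ?_⟩⟩
    rw [norm_zero] at hβ
    simpa using hβ
  · have hφ' : 0 < ‖φ‖ := norm_pos_iff.2 hφ
    refine ⟨‖φ‖⁻¹ • φ, norm_smul_inv_norm hφ, 1 - (1 - β) / ‖φ‖,
      sub_pos.2 ((div_lt_one hφ').2 hβ), fun w ⟨hw, hφw⟩ => ⟨hw, ?_⟩⟩
    rwa [_root_.sub_sub_cancel, smul_apply, smul_eq_mul, inv_mul_eq_div,
      div_lt_div_iff_of_pos_right hφ'] at hφw

end Slices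

namespace MeasureTheory

variable {Ω : Type*} [MeasurableSpace Ω] {p : ℝ≥0∞} {μ : Measure Ω}

section

variable {X : Type*} [NormedAddCommGroup X]

theorem nontrivial_of_nontrivial_Lp [Nontrivial (Lp X p μ)] : Nontrivial X := by
  by_contra hX
  rw [not_nontrivial_iff_subsingleton] at hX
  obtain ⟨f, g, hfg⟩ := exists_pair_ne (Lp X p μ)
  exact hfg (Lp.ext (ae_of_all _ fun _ => Subsingleton.elim _ _))

theorem indicatorConstLp_smul {𝕜 : Type*} [NormedRing 𝕜] [Module 𝕜 X] [IsBoundedSMul 𝕜 X]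
    {s : Set Ω} (hs : MeasurableSet s) (hμs : μ s ≠ ∞) (r : 𝕜) (c : X) :
    indicatorConstLp p hs hμs (r • c) = r • indicatorConstLp p hs hμs c := by
  rw [indicatorConstLp, indicatorConstLp, ← MemLp.toLp_const_smul]
  exact MemLp.toLp_congr _ _ (ae_of_all _ fun ω => by by_cases hω : ω ∈ s <;> simp [hω])

variable (p) (𝕜 : Type*) [NormedField 𝕜] [NormedSpace 𝕜 X] [Fact (1 ≤ p)] in
def indicatorConstLpL {s : Set Ω} (hs : MeasurableSet s) (hμs : μ s ≠ ∞) :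
    X →L[𝕜] Lp X p μ :=
  LinearMap.mkContinuous
    { toFun := indicatorConstLp p hs hμs
      map_add' := fun _ _ => (indicatorConstLp_add (hs := hs) (hμs := hμs)).symm
      map_smul' := indicatorConstLp_smul hs hμs }
    (μ.real s ^ (1 / p.toReal))
    fun c => by rw [mul_comm]; exact norm_indicatorConstLp_le (hs := hs) (hμs := hμs)

end

namespace SimpleFunc

variable [IsFiniteMeasure μ] {X Y : Type*} [NormedAddCommGroup Y]

variable (p μ) in
def mapLp (σ : SimpleFunc Ω X) (g : X → Y) : Lp Y p μ :=
  MemLp.toLp (g ∘ σ) ((σ.map g).memLp_of_isFiniteMeasure p μ)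

variable (σ : SimpleFunc Ω X)

theorem coeFn_mapLp (g : X → Y) : mapLp p μ σ g =ᵐ[μ] g ∘ σ :=
  MemLp.coeFn_toLp _

theorem mapLp_sub (g h : X → Y) : mapLp p μ σ (g - h) = mapLp p μ σ g - mapLp p μ σ h :=
  MemLp.toLp_sub _ _

theorem mapLp_smul {𝕜 : Type*} [NormedRing 𝕜] [Module 𝕜 Y] [IsBoundedSMul 𝕜 Y]
    (r : 𝕜) (g : X → Y) : mapLp p μ σ (r • g) = r • mapLp p μ σ g :=
  MemLp.toLp_const_smul _ _

theorem norm_mapLp_le_norm_mapLp {g h : X → Y} (hgh : ∀ y ∈ σ.range, ‖g y‖ ≤ ‖h y‖) :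
    ‖mapLp p μ σ g‖ ≤ ‖mapLp p μ σ h‖ :=
  Lp.norm_le_norm_of_ae_le <| by
    filter_upwards [coeFn_mapLp σ g, coeFn_mapLp σ h] with ω hg hh
    rw [hg, hh]
    exact hgh _ (σ.mem_range_self ω)

theorem mapLp_eq_sum (g : X → Y) :
    mapLp p μ σ g = ∑ y ∈ σ.range,
      indicatorConstLp p (σ.measurableSet_fiber y) (measure_ne_top μ _) (g y) := by
  refine Lp.ext ?_
  filter_upwards [coeFn_mapLp σ g, Lp.coeFn_finsetSum σ.range fun y =>
      indicatorConstLp p (σ.measurableSet_fiber y) (measure_ne_top μ _) (g y),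
    (Filter.eventually_all_finset σ.range).2 fun y _ =>
      indicatorConstLp_coeFn (hs := σ.measurableSet_fiber y) (hμs := measure_ne_top μ _)
        (c := g y)]
    with ω hg hsum hind
  rw [hg, hsum, Finset.sum_apply, Finset.sum_congr rfl hind,
    Finset.sum_eq_single_of_mem (σ ω) (σ.mem_range_self ω)]
  · simp
  · intro y _ hy
    simp [Ne.symm hy]

theorem mapLp_toSimpleFunc_id (f : Lp.simpleFunc Y p μ) :
    mapLp p μ (Lp.simpleFunc.toSimpleFunc f) id = f :=
  Lp.ext ((coeFn_mapLp _ id).trans (Lp.simpleFunc.toSimpleFunc_eq_toFun f))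

end SimpleFunc

end MeasureTheory

namespace MeasureTheory.SimpleFunc

variable {Ω : Type*} [MeasurableSpace Ω] {μ : Measure Ω} [IsFiniteMeasure μ] {p : ℝ≥0∞}
  [Fact (1 ≤ p)] {X : Type*} [NormedAddCommGroup X] [NormedSpace ℝ X]

theorem exists_norm_mapLp_lt_one_lt_apply (hp : p ≠ ∞) (F : Lp X p μ →L[ℝ] ℝ) {c : ℝ}
    (hc : c < ‖F‖) : ∃ σ : SimpleFunc Ω X, ‖mapLp p μ σ id‖ < 1 ∧ c < F (mapLp p μ σ id) := by
  obtain ⟨f, hf⟩ := (Lp.simpleFunc.denseRange hp).exists_mem_open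
    ((isOpen_lt continuous_norm continuous_const).inter (isOpen_lt continuous_const F.continuous))
    (exists_norm_lt_one_lt_apply F hc)
  exact ⟨Lp.simpleFunc.toSimpleFunc f, by rwa [mapLp_toSimpleFunc_id]⟩

def fiberFunctional (F : Lp X p μ →L[ℝ] ℝ) (σ : SimpleFunc Ω X) (y : X) : X →L[ℝ] ℝ :=
  F.comp (indicatorConstLpL p ℝ (σ.measurableSet_fiber y) (measure_ne_top μ _))

variable (F : Lp X p μ →L[ℝ] ℝ) (σ : SimpleFunc Ω X)

theorem apply_mapLp_eq_sum (g : X → X) :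
    F (mapLp p μ σ g) = ∑ y ∈ σ.range, fiberFunctional F σ y (g y) := by
  rw [mapLp_eq_sum, map_sum]
  rfl

theorem mapLp_norm_smul_mem_ballSlice {β δ : ℝ} (hσ : ‖mapLp p μ σ id‖ ≤ 1)
    (hF : 1 - β + δ * ∑ y ∈ σ.range, ‖y‖ < F (mapLp p μ σ id)) {v : X → X}
    (hv : ∀ y ∈ σ.range,
      v y ∈ ballSlice X (fiberFunctional F σ y) (1 - ‖fiberFunctional F σ y‖ + δ)) :
    mapLp p μ σ (fun y => ‖y‖ • v y) ∈ ballSlice (Lp X p μ) F β := by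
  refine ⟨mem_closedBall_zero_iff.2 ((norm_mapLp_le_norm_mapLp σ fun y hy => ?_).trans hσ), ?_⟩
  · rw [norm_smul, norm_norm, id]
    exact mul_le_of_le_one_right (norm_nonneg _) (mem_closedBall_zero_iff.1 (hv y hy).1)
  have hterm : ∀ y ∈ σ.range, fiberFunctional F σ y y - δ * ‖y‖
      ≤ fiberFunctional F σ y (‖y‖ • v y) := by
    intro y hy
    have hy_le : fiberFunctional F σ y y ≤ ‖fiberFunctional F σ y‖ * ‖y‖ :=
      (le_abs_self _).trans ((fiberFunctional F σ y).le_opNorm y)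
    have hvy := mul_le_mul_of_nonneg_left (hv y hy).2.le (norm_nonneg y)
    rw [map_smul, smul_eq_mul]
    linarith
  calc 1 - β < F (mapLp p μ σ id) - δ * ∑ y ∈ σ.range, ‖y‖ := by linarith
    _ = ∑ y ∈ σ.range, (fiberFunctional F σ y y - δ * ‖y‖) := by
      rw [apply_mapLp_eq_sum, Finset.mul_sum, ← Finset.sum_sub_distrib]
      rfl
    _ ≤ ∑ y ∈ σ.range, fiberFunctional F σ y (‖y‖ • v y) := Finset.sum_le_sum hterm
    _ = F (mapLp p μ σ fun y => ‖y‖ • v y) := (apply_mapLp_eq_sum F σ _).symm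

theorem mul_norm_mapLp_le_norm_sub {r : ℝ} (hr : 0 ≤ r) {v v' : X → X}
    (hvv' : ∀ y ∈ σ.range, r ≤ ‖v y - v' y‖) :
    r * ‖mapLp p μ σ id‖
      ≤ ‖mapLp p μ σ (fun y => ‖y‖ • v y) - mapLp p μ σ (fun y => ‖y‖ • v' y)‖ := by
  rw [← mapLp_sub, ← norm_smul_of_nonneg hr, ← mapLp_smul]
  refine norm_mapLp_le_norm_mapLp σ fun y hy => ?_
  rw [Pi.smul_apply, Pi.sub_apply, ← smul_sub, norm_smul_of_nonneg hr, norm_smul, norm_norm, id,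
    mul_comm]
  exact mul_le_mul_of_nonneg_left (hvv' y hy) (norm_nonneg y)

theorem exists_diam_ballSlice_fiberFunctional_le {β δ r : ℝ} (hr : 0 ≤ r)
    (hσ : ‖mapLp p μ σ id‖ ≤ 1) (hF : 1 - β + δ * ∑ y ∈ σ.range, ‖y‖ < F (mapLp p μ σ id))
    (hdiam : diam (ballSlice (Lp X p μ) F β) < r * ‖mapLp p μ σ id‖) :
    ∃ y ∈ σ.range,
      diam (ballSlice X (fiberFunctional F σ y) (1 - ‖fiberFunctional F σ y‖ + δ)) ≤ r := by
  suffices ∃ y ∈ σ.range, ∀ a ∈ ballSlice X (fiberFunctional F σ y)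
      (1 - ‖fiberFunctional F σ y‖ + δ), ∀ b ∈ ballSlice X (fiberFunctional F σ y)
      (1 - ‖fiberFunctional F σ y‖ + δ), dist a b ≤ r by
    obtain ⟨y, hy, hsmall⟩ := this
    exact ⟨y, hy, diam_le_of_forall_dist_le hr hsmall⟩
  by_contra! hlarge
  choose! v hv v' hv' hvv' using hlarge
  have hdist := dist_le_diam_of_mem (isBounded_closedBall.subset (ballSlice_subset_closedBall F β))
    (mapLp_norm_smul_mem_ballSlice F σ hσ hF hv) (mapLp_norm_smul_mem_ballSlice F σ hσ hF hv')
  have hsep := mul_norm_mapLp_le_norm_sub (p := p) (μ := μ) σ hr fun y hy =>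
    (dist_eq_norm (v y) _ ▸ hvv' y hy).le
  rw [dist_eq_norm] at hdist
  linarith

end MeasureTheory.SimpleFunc

open MeasureTheory SimpleFunc in
theorem statement18_general (Ω : Type*) [MeasurableSpace Ω] (μ : Measure Ω) [IsFiniteMeasure μ]
    (X : Type*) [NormedAddCommGroup X] [NormedSpace ℝ X]
    (p : ℝ≥0∞) [Fact (1 ≤ p)] (hp : p ≠ ∞)
    (h : BDP (Lp X p μ)) : BDP X := by
  have : Nontrivial (Lp X p μ) := h.nontrivial
  have : Nontrivial X := nontrivial_of_nontrivial_Lp (p := p) (μ := μ)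
  intro ε hε
  obtain ⟨F, hF, β, hβ, hdiam⟩ := h (ε / 4) (by positivity)
  obtain ⟨σ, hσ, hFσ⟩ := exists_norm_mapLp_lt_one_lt_apply hp F (c := max (1 - β / 2) (1 / 2))
    (by rw [hF, max_lt_iff]; constructor <;> linarith)
  rw [max_lt_iff] at hFσ
  set B := ∑ y ∈ σ.range, ‖y‖
  set δ := β / (2 * (B + 1))
  have hδ : 0 < δ := by positivity
  have hδB : δ * B < β / 2 := by
    rw [div_mul_eq_mul_div, div_lt_div_iff₀ (by positivity) two_pos]
    nlinarith
  have hFσ_le : F (mapLp p μ σ id) ≤ ‖mapLp p μ σ id‖ := by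
    simpa [hF] using (le_abs_self _).trans (F.le_opNorm (mapLp p μ σ id))
  obtain ⟨y, -, hy⟩ := exists_diam_ballSlice_fiberFunctional_le F σ (β := β) (δ := δ)
    (r := ε / 2) (by positivity) hσ.le (by linarith) (by nlinarith)
  obtain ⟨f, hf, α, hα, hsub⟩ :=
    exists_ballSlice_subset_ballSlice (fiberFunctional F σ y) (β := 1 - _ + δ) (by linarith)
  refine ⟨f, hf, α, hα, ?_⟩
  calc diam (ballSlice X f α) ≤ ε / 2 :=
        (diam_mono hsub (isBounded_closedBall.subset (ballSlice_subset_closedBall _ _))).trans hy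
    _ < ε := by linarith

open MeasureTheory in
/-- For a finite measure `μ` and `1 ≤ p < ∞`, if the Lebesgue–Bochner space `Lᵖ(μ, X)`
has `BDP`, then `X` has `BDP`. -/
theorem statement18 (Ω : Type*) [MeasurableSpace Ω] (μ : Measure Ω) [IsFiniteMeasure μ]
    (X : Type*) [NormedAddCommGroup X] [NormedSpace ℝ X] [CompleteSpace X]
    (p : ℝ≥0∞) [Fact (1 ≤ p)] (hp : p ≠ ∞)
    (h : BDP (Lp X p μ)) : BDP X :=
  statement18_general Ω μ X p hp h
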